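/- (Smoothing of digital payoffs by pre-integration.) Let X : ℝ × ℝ → ℝ be continuously differentiable with ∂_y X(y,z) ≥ ε for some ε > 0 and all (y,z), and assume that for each z, X(y,z) → +∞ as y → +∞ and X(y,z) → −∞ as y → −∞. Fix K ∈ ℝ. Then: (i) for each z there exists a unique y*(z) ∈ ℝ with X(y*(z), z) = K; (ii) y* is continuously differentiable with (y*)'(z) = − ∂_z X(y*(z), z) / ∂_y X(y*(z), z); (iii) the pre-integrated digital payoff h(z) := ∫_ℝ 1_{X(y,z) > K} φ(y) dy equals 1 − Φ(y*(z)), where Φ is the standard normal distribution function; and (iv) h is continuously differentiable with h'(z) = φ(y*(z)) · ∂_z X(y*(z), z) / ∂_y X(y*(z), z). -/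

import Mathlib

open MeasureTheory

/-- The standard normal density φ(y) = (2π)^{-1/2} exp(-y²/2). -/
noncomputable def stdGaussPDF (y : ℝ) : ℝ :=
  (Real.sqrt (2 * Real.pi))⁻¹ * Real.exp (-y^2/2)

/-!
Since `∂_y X ≥ ε > 0` and `X(·, z)` is unbounded in both directions, `X(·, z)` is a strictly
increasing bijection of `ℝ`, so `y*(z)` exists and is unique. Around each `(z, y*(z))` the implicit
function theorem gives a `C¹` local solution, which coincides with `y*` by global uniqueness; then
differentiating `X(y*(z), z) = K` yields `(y*)'`. The digital payoff is the indicator of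
`{y > y*(z)}`, so `h = 1 - Φ ∘ y*`, and `h'` follows from the chain rule with `Φ' = φ`.
-/

open Set ProbabilityTheory

section Partial

variable {𝕜 : Type*} [NontriviallyNormedField 𝕜]
  {E₁ : Type*} [NormedAddCommGroup E₁] [NormedSpace 𝕜 E₁]
  {E₂ : Type*} [NormedAddCommGroup E₂] [NormedSpace 𝕜 E₂]
  {F : Type*} [NormedAddCommGroup F] [NormedSpace 𝕜 F]

theorem fderiv_comp_inr {f : E₁ × E₂ → F} {x : E₁} {y : E₂}
    (hf : DifferentiableAt 𝕜 f (x, y)) :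
    fderiv 𝕜 f (x, y) ∘L .inr 𝕜 E₁ E₂ = fderiv 𝕜 (fun y' => f (x, y')) y :=
  ((hf.hasFDerivAt.comp y (hasFDerivAt_prodMk_right x y)).fderiv).symm

theorem isInvertible_fderiv_of_deriv_ne_zero {g : 𝕜 → 𝕜} {x : 𝕜} (h : deriv g x ≠ 0) :
    (fderiv 𝕜 g x).IsInvertible :=
  ⟨.unitsEquivAut 𝕜 (.mk0 _ h), by
    ext
    simp only [ContinuousLinearEquiv.coe_coe, ContinuousLinearEquiv.unitsEquivAut_apply,
      Units.val_mk0, one_mul]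
    rfl⟩

theorem HasFDerivAt.hasDerivAt_comp_prodMk {f : 𝕜 × 𝕜 → F} {L : 𝕜 × 𝕜 →L[𝕜] F}
    {u v : 𝕜 → 𝕜} {u' v' t : 𝕜} (hf : HasFDerivAt f L (u t, v t)) (hu : HasDerivAt u u' t)
    (hv : HasDerivAt v v' t) :
    HasDerivAt (fun s => f (u s, v s)) (u' • L (1, 0) + v' • L (0, 1)) t := by
  have h := hf.comp_hasDerivAt t (hu.prodMk hv)
  rwa [show (u', v') = u' • ((1 : 𝕜), (0 : 𝕜)) + v' • ((0 : 𝕜), (1 : 𝕜)) by simp, map_add,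
    map_smul, map_smul] at h

theorem deriv_smul_deriv_add_deriv_eq_zero {f : 𝕜 → 𝕜 → F} {ψ : 𝕜 → 𝕜} {c : F} {z : 𝕜}
    (hf : DifferentiableAt 𝕜 (Function.uncurry f) (ψ z, z)) (hψ : DifferentiableAt 𝕜 ψ z)
    (h : ∀ z', f (ψ z') z' = c) :
    deriv ψ z • deriv (fun y => f y z) (ψ z) + deriv (fun z' => f (ψ z) z') z = 0 := by
  have hL := hf.hasFDerivAt
  have hy := (hL.hasDerivAt_comp_prodMk (hasDerivAt_id' (ψ z)) (hasDerivAt_const (ψ z) z)).deriv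
  have hz := (hL.hasDerivAt_comp_prodMk (hasDerivAt_const z (ψ z)) (hasDerivAt_id' z)).deriv
  have hc := (hL.hasDerivAt_comp_prodMk hψ.hasDerivAt (hasDerivAt_id' z)).deriv
  simp only [Function.uncurry_apply_pair, h, deriv_const] at hy hz hc
  simpa [hy, hz] using hc.symm

end Partial

section Implicit

variable {𝕜 : Type*} [RCLike 𝕜]
  {E₁ : Type*} [NormedAddCommGroup E₁] [NormedSpace 𝕜 E₁] [CompleteSpace E₁]
  {E₂ : Type*} [NormedAddCommGroup E₂] [NormedSpace 𝕜 E₂] [CompleteSpace E₂]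
  {F : Type*} [NormedAddCommGroup F] [NormedSpace 𝕜 F] [CompleteSpace F]

theorem contDiff_of_apply_eq_of_unique {f : E₁ × E₂ → F} {n : WithTop ℕ∞} (hf : ContDiff 𝕜 n f)
    (hn : n ≠ 0) {ψ : E₁ → E₂} {c : F} (hψ : ∀ x, f (x, ψ x) = c)
    (huniq : ∀ x y, f (x, y) = c → y = ψ x)
    (hinv : ∀ x, (fderiv 𝕜 (fun y => f (x, y)) (ψ x)).IsInvertible) :
    ContDiff 𝕜 n ψ := by
  refine contDiff_iff_contDiffAt.2 fun x₀ => ?_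
  have if₂ : (fderiv 𝕜 f (x₀, ψ x₀) ∘L .inr 𝕜 E₁ E₂).IsInvertible := by
    rw [fderiv_comp_inr ((hf.differentiable hn).differentiableAt)]
    exact hinv x₀
  have cdf : ContDiffAt 𝕜 n f (x₀, ψ x₀) := hf.contDiffAt
  refine (cdf.contDiffAt_implicitFunction hn if₂).congr_of_eventuallyEq ?_
  filter_upwards [cdf.eventually_apply_implicitFunction hn if₂] with x hx
  exact (huniq x _ (hx.trans (hψ x₀))).symm

end Implicit

theorem hasDerivAt_integral_Iic {E : Type*} [NormedAddCommGroup E] [NormedSpace ℝ E]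
    [CompleteSpace E] {f : ℝ → E} (hf : Integrable f) (hc : Continuous f) (t : ℝ) :
    HasDerivAt (fun s => ∫ y in Iic s, f y) (f t) t := by
  have hsplit : (fun s => ∫ y in Iic s, f y) = fun s => (∫ y in Iic 0, f y) + ∫ y in 0..s, f y := by
    ext s
    rw [← intervalIntegral.integral_Iic_sub_Iic hf.integrableOn hf.integrableOn, add_sub_cancel]
  rw [hsplit]
  exact (hc.integral_hasStrictDerivAt 0 t).hasDerivAt.const_add _

theorem integral_ite_lt_of_strictMono {E : Type*} [NormedAddCommGroup E] [NormedSpace ℝ E]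
    [CompleteSpace E]    {f : ℝ → E} (hf : Integrable f) {g : ℝ → ℝ} (hg : StrictMono g) {y₀ c : ℝ} (hy₀ : g y₀ = c) :
    ∫ y, (if c < g y then f y else 0) = (∫ y, f y) - ∫ y in Iic y₀, f y := by
  have hind : (fun y => if c < g y then f y else 0) = (Ioi y₀).indicator f := by
    ext y
    simp [indicator_apply, ← hy₀, hg.lt_iff_lt]
  rw [hind, integral_indicator measurableSet_Ioi]
  exact eq_sub_of_add_eq' (intervalIntegral.integral_Iic_add_Ioi hf.integrableOn hf.integrableOn)

noncomputable def stdGaussCDF (t : ℝ) : ℝ :=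
  ∫ y in Iic t, stdGaussPDF y

theorem stdGaussPDF_eq_gaussianPDFReal : stdGaussPDF = gaussianPDFReal 0 1 := by
  ext y
  simp [stdGaussPDF, gaussianPDFReal, neg_div]

theorem integrable_stdGaussPDF : Integrable stdGaussPDF :=
  stdGaussPDF_eq_gaussianPDFReal ▸ integrable_gaussianPDFReal 0 1

theorem integral_stdGaussPDF : ∫ y, stdGaussPDF y = 1 :=
  stdGaussPDF_eq_gaussianPDFReal ▸ integral_gaussianPDFReal_eq_one 0 one_ne_zero

theorem continuous_stdGaussPDF : Continuous stdGaussPDF := by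
  unfold stdGaussPDF
  fun_prop

theorem hasDerivAt_stdGaussCDF (t : ℝ) : HasDerivAt stdGaussCDF (stdGaussPDF t) t :=
  hasDerivAt_integral_Iic integrable_stdGaussPDF continuous_stdGaussPDF t

theorem contDiff_stdGaussCDF : ContDiff ℝ 1 stdGaussCDF := by
  refine contDiff_one_iff_deriv.2 ⟨fun t => (hasDerivAt_stdGaussCDF t).differentiableAt, ?_⟩
  rw [funext fun t => (hasDerivAt_stdGaussCDF t).deriv]
  exact continuous_stdGaussPDF

/-- smoothing of digital payoffs by pre-integration: under monotonicity
(`∂_y X ≥ ε > 0`) and growth conditions, (i) for each `z` there is a unique root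
`y*(z)` of `X(·,z) = K`; (ii) `y*` is continuously differentiable with
`(y*)'(z) = -∂_z X(y*(z),z)/∂_y X(y*(z),z)`; (iii) the pre-integrated digital payoff
`h(z) = ∫ 1_{X(y,z)>K} φ(y) dy` equals `1 - Φ(y*(z))`; (iv) `h` is continuously
differentiable with `h'(z) = φ(y*(z)) ∂_z X(y*(z),z)/∂_y X(y*(z),z)`. -/
theorem digital_preintegration_smoothing (X : ℝ → ℝ → ℝ)
    (hX : ContDiff ℝ 1 fun q : ℝ × ℝ => X q.1 q.2)
    (ε : ℝ) (hε : 0 < ε) (hXy : ∀ y z, ε ≤ deriv (fun y' => X y' z) y)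
    (htop : ∀ z, Filter.Tendsto (fun y => X y z) Filter.atTop Filter.atTop)
    (hbot : ∀ z, Filter.Tendsto (fun y => X y z) Filter.atBot Filter.atBot)
    (K : ℝ) :
    ∃ ystar : ℝ → ℝ,
      (∀ z, X (ystar z) z = K) ∧
      (∀ z y, X y z = K → y = ystar z) ∧
      ContDiff ℝ 1 ystar ∧
      (∀ z, deriv ystar z =
        -(deriv (fun z' => X (ystar z) z') z) / deriv (fun y => X y z) (ystar z)) ∧
      (∀ z, (∫ y : ℝ, if K < X y z then stdGaussPDF y else 0) =
        1 - ∫ y in Set.Iic (ystar z), stdGaussPDF y) ∧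
      ContDiff ℝ 1 (fun z => ∫ y : ℝ, if K < X y z then stdGaussPDF y else 0) ∧
      (∀ z, deriv (fun z' => ∫ y : ℝ, if K < X y z' then stdGaussPDF y else 0) z =
        stdGaussPDF (ystar z) *
          deriv (fun z' => X (ystar z) z') z / deriv (fun y => X y z) (ystar z)) := by
  have hpos : ∀ y z, 0 < deriv (fun y' => X y' z) y := fun y z => hε.trans_le (hXy y z)
  have hmono : ∀ z, StrictMono (fun y => X y z) := fun z => strictMono_of_deriv_pos (hpos · z)
  have hcont : ∀ z, Continuous (fun y => X y z) := fun z =>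
    hX.continuous.comp (continuous_id.prodMk continuous_const)
  choose ystar hroot using fun z => (hcont z).surjective (htop z) (hbot z) K
  have huniq : ∀ z y, X y z = K → y = ystar z := fun z y h =>
    (hmono z).injective (h.trans (hroot z).symm)
  have hystar : ContDiff ℝ 1 ystar :=
    contDiff_of_apply_eq_of_unique (hX.comp (contDiff_snd.prodMk contDiff_fst)) one_ne_zero
      hroot huniq fun z => isInvertible_fderiv_of_deriv_ne_zero (hpos _ z).ne'
  have hderiv : ∀ z, deriv ystar z =
      -(deriv (fun z' => X (ystar z) z') z) / deriv (fun y => X y z) (ystar z) := fun z => by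
    rw [eq_div_iff (hpos _ z).ne', ← add_eq_zero_iff_eq_neg, ← smul_eq_mul]
    exact deriv_smul_deriv_add_deriv_eq_zero ((hX.differentiable one_ne_zero) _)
      ((hystar.differentiable one_ne_zero) z) hroot
  have hpayoff : ∀ z, (∫ y : ℝ, if K < X y z then stdGaussPDF y else 0) =
      1 - stdGaussCDF (ystar z) := fun z => by
    rw [integral_ite_lt_of_strictMono integrable_stdGaussPDF (hmono z) (hroot z),
      integral_stdGaussPDF, stdGaussCDF]
  refine ⟨ystar, hroot, huniq, hystar, hderiv, hpayoff, ?_, fun z => ?_⟩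
  · rw [funext hpayoff]
    exact contDiff_const.sub (contDiff_stdGaussCDF.comp hystar)
  · have hΦy := ((hasDerivAt_stdGaussCDF _).comp z
      ((hystar.differentiable one_ne_zero) z).hasDerivAt).const_sub 1
    rw [funext hpayoff]
    refine hΦy.deriv.trans ?_
    rw [hderiv]
    ring
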